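/- Let (G, ρ) be a finitely generated marked group satisfying the word-problem assumption, (K, ρ) a G-field, and suppose V, W, W′ are K-irreducible varieties with W ⊆ ᵖV, W′ ⊆ ᵖW ∩ ᵖ·ᵖV and all projections W → ᵖⁱV, W′ → ᵖⁱW dominant. Then there exist field homomorphisms ρ′ : K(V) → K(W) and ρ″ : K(W) → K(W′) making (K(V), K(W), K(W′), ρ′, ρ″) a G-kernel; moreover there is a K-generic point a ∈ V(K(V)) whose image ρ′(a) is a K-generic point of W. -/

import Mathlib

/-!
The hypotheses on `W` and `W′` say that the twisted substitutions `f ↦ (ρᵢ f)(X₍ᵢ,·₎)` pull the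
ideal of `W` (resp. `W′`) back exactly to the ideal of `V` (resp. `W`), so they descend to
embeddings of function fields. Homomorphisms out of a function field are determined by constants
and coordinates: on constants the composites `ρ″ᵢ ∘ ρ′ⱼ` act through `ρᵢρⱼ`, and on coordinates the
diagonal conditions of `ᵖ·ᵖV` identify them. Constants and coordinates also generate the
function fields, which gives the generation conditions.
-/

universe u

noncomputable section

open MvPolynomial

/-- The transform `ᵍV` of a variety under a field automorphism coming from the group
element `g`: the image of its ideal under the coefficient-wise action of `g`. -/
def actTransform {G : Type u} [Group G] {K : Type u} [Field K] [MulSemiringAction G K]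
    {n : Type*} (g : G) (P : Ideal (MvPolynomial n K)) : Ideal (MvPolynomial n K) :=
  P.map (MvPolynomial.map (MulSemiringAction.toRingHom G K g))

/-- The function field `K(V)` of the variety given by the ideal `P`. -/
abbrev funField {K : Type u} [Field K] {n : Type*} (P : Ideal (MvPolynomial n K)) :=
  FractionRing (MvPolynomial n K ⧸ P)

/-- The structure embedding `K → K(V)`. -/
def funFieldC {K : Type u} [Field K] {n : Type*} (P : Ideal (MvPolynomial n K)) :
    K →+* funField P :=
  (algebraMap (MvPolynomial n K ⧸ P) (funField P)).comp
    ((Ideal.Quotient.mk P).comp MvPolynomial.C)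

/-- The coordinate functions of `K(V)` (the canonical `K`-generic point of `V`). -/
def funFieldX {K : Type u} [Field K] {n : Type*} (P : Ideal (MvPolynomial n K)) (i : n) :
    funField P :=
  algebraMap (MvPolynomial n K ⧸ P) (funField P) (Ideal.Quotient.mk P (MvPolynomial.X i))

section FunctionField

variable {K : Type u} [Field K] {σ : Type*}

def funFieldMk (P : Ideal (MvPolynomial σ K)) : MvPolynomial σ K →+* funField P :=
  (algebraMap (MvPolynomial σ K ⧸ P) (funField P)).comp (Ideal.Quotient.mk P)

theorem funFieldMk_C (P : Ideal (MvPolynomial σ K)) (k : K) :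
    funFieldMk P (C k) = funFieldC P k :=
  rfl

theorem funFieldMk_X (P : Ideal (MvPolynomial σ K)) (s : σ) :
    funFieldMk P (X s) = funFieldX P s :=
  rfl

theorem funFieldMk_eq_zero_iff (P : Ideal (MvPolynomial σ K)) (f : MvPolynomial σ K) :
    funFieldMk P f = 0 ↔ f ∈ P := by
  rw [funFieldMk, RingHom.comp_apply,
    map_eq_zero_iff _ (IsFractionRing.injective (MvPolynomial σ K ⧸ P) (funField P)),
    Ideal.Quotient.eq_zero_iff_mem]

theorem eval₂_funFieldC_funFieldX (P : Ideal (MvPolynomial σ K)) (f : MvPolynomial σ K) :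
    eval₂ (funFieldC P) (funFieldX P) f = funFieldMk P f := by
  have : eval₂Hom (funFieldC P) (funFieldX P) = funFieldMk P :=
    MvPolynomial.ringHom_ext (fun _ => eval₂Hom_C _ _ _) (fun _ => eval₂Hom_X' _ _ _)
  exact RingHom.congr_fun this f

theorem funField_ringHom_ext {P : Ideal (MvPolynomial σ K)} {L : Type*} [CommSemiring L]
    {φ ψ : funField P →+* L} (hC : ∀ k, φ (funFieldC P k) = ψ (funFieldC P k))
    (hX : ∀ s, φ (funFieldX P s) = ψ (funFieldX P s)) : φ = ψ :=
  IsLocalization.ringHom_ext (nonZeroDivisors (MvPolynomial σ K ⧸ P))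
    (Ideal.Quotient.ringHom_ext (MvPolynomial.ringHom_ext hC hX))

theorem funField_subfield_eq_top (P : Ideal (MvPolynomial σ K)) [P.IsPrime]
    {S : Subfield (funField P)} (hC : ∀ k, funFieldC P k ∈ S) (hX : ∀ s, funFieldX P s ∈ S) :
    S = ⊤ := by
  have hmk (f : MvPolynomial σ K) : funFieldMk P f ∈ S := by
    induction f using MvPolynomial.induction_on with
    | C k => exact hC k
    | add p q hp hq => rw [map_add]; exact S.add_mem hp hq
    | mul_X p s hp => rw [map_mul]; exact S.mul_mem hp (hX s)
  rw [eq_top_iff, ← IsFractionRing.closure_range_algebraMap (MvPolynomial σ K ⧸ P),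
    Subfield.closure_le]
  rintro _ ⟨a, rfl⟩
  obtain ⟨f, rfl⟩ := Ideal.Quotient.mk_surjective a
  exact hmk f

end FunctionField

section TwistedSubstitution

variable {G : Type u} [Group G] {K : Type u} [Field K] [MulSemiringAction G K]
  {σ τ υ : Type*}

theorem map_mem_actTransform_iff (g : G) (P : Ideal (MvPolynomial σ K)) (f : MvPolynomial σ K) :
    MvPolynomial.map (MulSemiringAction.toRingHom G K g) f ∈ actTransform g P ↔ f ∈ P := by
  have hbij : Function.Bijective (MvPolynomial.map (σ := σ) (MulSemiringAction.toRingHom G K g)) :=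
    (mapEquiv σ (MulSemiringAction.toRingEquiv G K g)).bijective
  rw [actTransform, ← Ideal.mem_comap, Ideal.comap_map_of_bijective _ hbij]

theorem funFieldMk_rename_map_eq_zero_iff {g : G} {e : σ → τ} {P : Ideal (MvPolynomial σ K)}
    {Q : Ideal (MvPolynomial τ K)}
    (h : Q.comap (rename e).toRingHom = actTransform g P) (f : MvPolynomial σ K) :
    funFieldMk Q (rename e (MvPolynomial.map (MulSemiringAction.toRingHom G K g) f)) = 0 ↔
      f ∈ P := by
  rw [funFieldMk_eq_zero_iff, ← map_mem_actTransform_iff g P, ← h]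
  rfl

def funFieldHom (g : G) (e : σ → τ) (P : Ideal (MvPolynomial σ K)) [P.IsPrime]
    (Q : Ideal (MvPolynomial τ K)) [Q.IsPrime]
    (h : Q.comap (rename e).toRingHom = actTransform g P) : funField P →+* funField Q :=
  IsFractionRing.lift (g := Ideal.Quotient.lift P
      ((funFieldMk Q).comp ((rename e).toRingHom.comp
        (MvPolynomial.map (MulSemiringAction.toRingHom G K g))))
      fun f hf => (funFieldMk_rename_map_eq_zero_iff h f).2 hf) <| by
    rw [injective_iff_map_eq_zero]
    intro a ha
    obtain ⟨f, rfl⟩ := Ideal.Quotient.mk_surjective a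
    exact Ideal.Quotient.eq_zero_iff_mem.2 ((funFieldMk_rename_map_eq_zero_iff h f).1 ha)

variable {g : G} {e : σ → τ} {P : Ideal (MvPolynomial σ K)} [P.IsPrime]
  {Q : Ideal (MvPolynomial τ K)} [Q.IsPrime]

theorem funFieldHom_funFieldMk (h : Q.comap (rename e).toRingHom = actTransform g P)
    (f : MvPolynomial σ K) :
    funFieldHom g e P Q h (funFieldMk P f) =
      funFieldMk Q (rename e (MvPolynomial.map (MulSemiringAction.toRingHom G K g) f)) :=
  (IsFractionRing.lift_algebraMap _ _).trans (Ideal.Quotient.lift_mk _ _ _)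

theorem funFieldHom_C (h : Q.comap (rename e).toRingHom = actTransform g P) (k : K) :
    funFieldHom g e P Q h (funFieldC P k) = funFieldC Q (g • k) := by
  rw [← funFieldMk_C, funFieldHom_funFieldMk, map_C, rename_C, funFieldMk_C]
  rfl

theorem funFieldHom_X (h : Q.comap (rename e).toRingHom = actTransform g P) (s : σ) :
    funFieldHom g e P Q h (funFieldX P s) = funFieldX Q (e s) := by
  rw [← funFieldMk_X, funFieldHom_funFieldMk, map_X, rename_X, funFieldMk_X]

theorem funFieldHom_comp_funFieldHom_eq {R : Ideal (MvPolynomial υ K)} [R.IsPrime]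
    {g₁ g₂ g₃ g₄ : G} {e₁ e₃ : τ → υ} {e₂ e₄ : σ → τ}
    (h₁ : R.comap (rename e₁).toRingHom = actTransform g₁ Q)
    (h₂ : Q.comap (rename e₂).toRingHom = actTransform g₂ P)
    (h₃ : R.comap (rename e₃).toRingHom = actTransform g₃ Q)
    (h₄ : Q.comap (rename e₄).toRingHom = actTransform g₄ P)
    (hg : g₁ * g₂ = g₃ * g₄) (hX : ∀ s, X (e₁ (e₂ s)) - X (e₃ (e₄ s)) ∈ R) :
    (funFieldHom g₁ e₁ Q R h₁).comp (funFieldHom g₂ e₂ P Q h₂) =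
      (funFieldHom g₃ e₃ Q R h₃).comp (funFieldHom g₄ e₄ P Q h₄) := by
  refine funField_ringHom_ext (fun k => ?_) (fun s => ?_)
  · simp only [RingHom.comp_apply, funFieldHom_C, ← mul_smul, hg]
  · simp only [RingHom.comp_apply, funFieldHom_X]
    rw [← sub_eq_zero, ← funFieldMk_X, ← funFieldMk_X, ← map_sub, funFieldMk_eq_zero_iff]
    exact hX s

theorem closure_iUnion_range_funFieldHom {ι : Type*} [Nonempty ι] {g : ι → G} {e : ι → σ → τ}
    (h : ∀ i, Q.comap (rename (e i)).toRingHom = actTransform (g i) P)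
    (he : ∀ t, ∃ i s, e i s = t) :
    Subfield.closure (⋃ i, Set.range (funFieldHom (g i) (e i) P Q (h i))) = ⊤ := by
  refine funField_subfield_eq_top Q (fun k => ?_) (fun t => ?_) <;>
    refine Subfield.subset_closure (Set.mem_iUnion.2 ?_)
  · obtain ⟨i⟩ := ‹Nonempty ι›
    exact ⟨i, funFieldC P ((g i)⁻¹ • k), by rw [funFieldHom_C, smul_inv_smul]⟩
  · obtain ⟨i, s, rfl⟩ := he t
    exact ⟨i, funFieldX P s, funFieldHom_X (h i) s⟩

end TwistedSubstitution

theorem statement19_general (G : Type u) [Group G] (m : ℕ) (ρ : Fin (m + 1) → G)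
    (K : Type u) [Field K] [MulSemiringAction G K]
    {n : ℕ} (JV : Ideal (MvPolynomial (Fin n) K)) [JV.IsPrime]
    (JW : Ideal (MvPolynomial (Fin (m + 1) × Fin n) K)) [JW.IsPrime]
    (JW' : Ideal (MvPolynomial (Fin (m + 1) × (Fin (m + 1) × Fin n)) K)) [JW'.IsPrime]
    -- `W ⊆ ᵖV` with dominant projections
    (hWV : ∀ i : Fin (m + 1),
      JW.comap (MvPolynomial.rename fun s : Fin n => (i, s)).toRingHom
        = actTransform (ρ i) JV)
    -- `W′ ⊆ ᵖW` with dominant projections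
    (hW'W : ∀ i : Fin (m + 1),
      JW'.comap (MvPolynomial.rename fun q : Fin (m + 1) × Fin n => (i, q)).toRingHom
        = actTransform (ρ i) JW)
    -- `W′ ⊆ ᵖ·ᵖV`: the word-problem diagonal conditions
    (hdiag : ∀ i j k l : Fin (m + 1), ρ i * ρ j = ρ k * ρ l → ∀ s : Fin n,
      MvPolynomial.X (i, (j, s)) - MvPolynomial.X (k, (l, s)) ∈ JW') :
    ∃ (ρ' : Fin (m + 1) → (funField JV →+* funField JW))
      (ρ'' : Fin (m + 1) → (funField JW →+* funField JW')),
      -- each `ρ′ᵢ` extends the action of `ρ i` on `K` and is characterized on coordinates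
      (∀ (i : Fin (m + 1)) (k : K), ρ' i (funFieldC JV k) = funFieldC JW (ρ i • k)) ∧
      (∀ (i : Fin (m + 1)) (s : Fin n), ρ' i (funFieldX JV s) = funFieldX JW (i, s)) ∧
      (∀ (i : Fin (m + 1)) (k : K), ρ'' i (funFieldC JW k) = funFieldC JW' (ρ i • k)) ∧
      (∀ (i : Fin (m + 1)) (q : Fin (m + 1) × Fin n),
        ρ'' i (funFieldX JW q) = funFieldX JW' (i, q)) ∧
      -- the word-problem (kernel) condition
      (∀ i j k l : Fin (m + 1), ρ i * ρ j = ρ k * ρ l →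
        ∀ z : funField JV, ρ'' i (ρ' j z) = ρ'' k (ρ' l z)) ∧
      -- generation: `L′ = ρ′₁(L)⋯ρ′ₘ(L)` and `L″ = ρ″₁(L′)⋯ρ″ₘ(L′)`
      Subfield.closure (⋃ i : Fin (m + 1), Set.range (ρ' i)) = (⊤ : Subfield (funField JW)) ∧
      Subfield.closure (⋃ i : Fin (m + 1), Set.range (ρ'' i)) = (⊤ : Subfield (funField JW')) ∧
      -- moreover: `ρ′(a)` is a `K`-generic point of `W`
      (∀ f : MvPolynomial (Fin (m + 1) × Fin n) K,
        MvPolynomial.eval₂ (funFieldC JW) (fun p => ρ' p.1 (funFieldX JV p.2)) f = 0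
          ↔ f ∈ JW) := by
  refine ⟨fun i => funFieldHom (ρ i) (fun s : Fin n => (i, s)) JV JW (hWV i),
    fun i => funFieldHom (ρ i) (fun q : Fin (m + 1) × Fin n => (i, q)) JW JW' (hW'W i),
    fun i => funFieldHom_C (hWV i), fun i => funFieldHom_X (hWV i),
    fun i => funFieldHom_C (hW'W i), fun i => funFieldHom_X (hW'W i),
    fun i j k l hrel => RingHom.congr_fun <| funFieldHom_comp_funFieldHom_eq
      (hW'W i) (hWV j) (hW'W k) (hWV l) hrel (hdiag i j k l hrel),
    closure_iUnion_range_funFieldHom hWV fun p => ⟨p.1, p.2, rfl⟩,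
    closure_iUnion_range_funFieldHom hW'W fun q => ⟨q.1, q.2, rfl⟩, fun f => ?_⟩
  simp only [funFieldHom_X]
  rw [eval₂_funFieldC_funFieldX, funFieldMk_eq_zero_iff]

/-- Let `(G, ρ)` be a finitely generated marked group (with `ρ 0 = 1`) satisfying the
word-problem assumption: `G` is presented by the generators `ρ` subject to the relations
`ρᵢρⱼ = ρₖρₗ` that hold among products of two generators. Let `K` be a `G`-field and let
`V, W, W′` be `K`-irreducible varieties (given by prime ideals `JV, JW, JW'`) with
`W ⊆ ᵖV`, `W′ ⊆ ᵖW ∩ ᵖ·ᵖV` and all projections `W → ᵖⁱV`, `W′ → ᵖⁱW` dominant (the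
contraction conditions below, plus the diagonal conditions of `ᵖ·ᵖV`). Then there are
field homomorphisms `ρ′ᵢ : K(V) → K(W)` and `ρ″ᵢ : K(W) → K(W′)` (characterized by their
values on constants and coordinates, with `ρ′₀, ρ″₀` the canonical inclusions) making
`(K(V), K(W), K(W′), ρ′, ρ″)` a `G`-kernel; moreover the canonical `K`-generic point
`a ∈ V(K(V))` has `ρ′(a)` a `K`-generic point of `W`. -/
theorem statement19 (G : Type u) [Group G] (m : ℕ) (ρ : Fin (m + 1) → G)
    (hρ0 : ρ 0 = 1)
    (hgen : Function.Surjective (FreeGroup.lift ρ : FreeGroup (Fin (m + 1)) →* G))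
    (hpres : (FreeGroup.lift ρ : FreeGroup (Fin (m + 1)) →* G).ker =
      Subgroup.normalClosure {w : FreeGroup (Fin (m + 1)) |
        ∃ i j k l : Fin (m + 1), ρ i * ρ j = ρ k * ρ l ∧
          w = FreeGroup.of i * FreeGroup.of j * (FreeGroup.of k * FreeGroup.of l)⁻¹})
    (K : Type u) [Field K] [MulSemiringAction G K]
    {n : ℕ} (JV : Ideal (MvPolynomial (Fin n) K)) [JV.IsPrime]
    (JW : Ideal (MvPolynomial (Fin (m + 1) × Fin n) K)) [JW.IsPrime]
    (JW' : Ideal (MvPolynomial (Fin (m + 1) × (Fin (m + 1) × Fin n)) K)) [JW'.IsPrime]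
    -- `W ⊆ ᵖV` with dominant projections
    (hWV : ∀ i : Fin (m + 1),
      JW.comap (MvPolynomial.rename fun s : Fin n => (i, s)).toRingHom
        = actTransform (ρ i) JV)
    -- `W′ ⊆ ᵖW` with dominant projections
    (hW'W : ∀ i : Fin (m + 1),
      JW'.comap (MvPolynomial.rename fun q : Fin (m + 1) × Fin n => (i, q)).toRingHom
        = actTransform (ρ i) JW)
    -- `W′ ⊆ ᵖ·ᵖV`: the word-problem diagonal conditions
    (hdiag : ∀ i j k l : Fin (m + 1), ρ i * ρ j = ρ k * ρ l → ∀ s : Fin n,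
      MvPolynomial.X (i, (j, s)) - MvPolynomial.X (k, (l, s)) ∈ JW') :
    ∃ (ρ' : Fin (m + 1) → (funField JV →+* funField JW))
      (ρ'' : Fin (m + 1) → (funField JW →+* funField JW')),
      -- each `ρ′ᵢ` extends the action of `ρ i` on `K` and is characterized on coordinates
      (∀ (i : Fin (m + 1)) (k : K), ρ' i (funFieldC JV k) = funFieldC JW (ρ i • k)) ∧
      (∀ (i : Fin (m + 1)) (s : Fin n), ρ' i (funFieldX JV s) = funFieldX JW (i, s)) ∧
      (∀ (i : Fin (m + 1)) (k : K), ρ'' i (funFieldC JW k) = funFieldC JW' (ρ i • k)) ∧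
      (∀ (i : Fin (m + 1)) (q : Fin (m + 1) × Fin n),
        ρ'' i (funFieldX JW q) = funFieldX JW' (i, q)) ∧
      -- the word-problem (kernel) condition
      (∀ i j k l : Fin (m + 1), ρ i * ρ j = ρ k * ρ l →
        ∀ z : funField JV, ρ'' i (ρ' j z) = ρ'' k (ρ' l z)) ∧
      -- generation: `L′ = ρ′₁(L)⋯ρ′ₘ(L)` and `L″ = ρ″₁(L′)⋯ρ″ₘ(L′)`
      Subfield.closure (⋃ i : Fin (m + 1), Set.range (ρ' i)) = (⊤ : Subfield (funField JW)) ∧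
      Subfield.closure (⋃ i : Fin (m + 1), Set.range (ρ'' i)) = (⊤ : Subfield (funField JW')) ∧
      -- moreover: `ρ′(a)` is a `K`-generic point of `W`
      (∀ f : MvPolynomial (Fin (m + 1) × Fin n) K,
        MvPolynomial.eval₂ (funFieldC JW) (fun p => ρ' p.1 (funFieldX JV p.2)) f = 0
          ↔ f ∈ JW) :=
  statement19_general G m ρ K JV JW JW' hWV hW'W hdiag
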